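/- arXiv:2604.00433 — 6 statements merged into one kernel-verified Lean document; each statement's English description precedes it below -/
import Mathlib

section
/- Let U be a nonempty finite set, p a probability mass function on U, A : U → ℝ with Σ_{u∈U} p(u) A(u) = 0, and c ≥ 0 a real number. Let A* = max_{u∈U} A(u) and a = Σ_{u : A(u) = A*} p(u). Then Σ_{u∈U} p(u) · exp(c · A(u)) ≥ 1 + (a/2) · (c · A*)². -/
/-- Taylor-expansion lower bound on the normalizing constant of the
exponentially tilted distribution. -/
theorem normalizer_taylor_lower_bound
    {U : Type*} [Fintype U] [Nonempty U]
    (p : U → ℝ) (hp0 : ∀ u, 0 ≤ p u) (hp1 : ∑ u, p u = 1)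
    (A : U → ℝ) (hA : ∑ u, p u * A u = 0)
    (c : ℝ) (hc : 0 ≤ c) :
    1 + (∑ u ∈ Finset.univ.filter
          (fun u => A u = Finset.univ.sup' Finset.univ_nonempty A), p u) / 2 *
        (c * Finset.univ.sup' Finset.univ_nonempty A) ^ 2
      ≤ ∑ u, p u * Real.exp (c * A u) := by
  set M := Finset.univ.sup' Finset.univ_nonempty A with hMdef
  have hle : ∀ u, A u ≤ M := fun u => Finset.le_sup' A (Finset.mem_univ u)
  have hM : 0 ≤ M := by
    by_contra h
    push_neg at h
    have : ∑ u, p u * A u ≤ ∑ u, p u * M := by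
      apply Finset.sum_le_sum
      intro u _
      exact mul_le_mul_of_nonneg_left (hle u) (hp0 u)
    rw [hA, ← Finset.sum_mul, hp1, one_mul] at this
    linarith
  have hcM : 0 ≤ c * M := mul_nonneg hc hM
  have key : ∀ u ∈ Finset.univ,
      p u * (1 + c * A u) + (if A u = M then p u * ((c * M) ^ 2 / 2) else 0)
        ≤ p u * Real.exp (c * A u) := by
    intro u _
    by_cases h : A u = M
    · simp only [h, if_pos]
      have := Real.quadratic_le_exp_of_nonneg hcM
      nlinarith [hp0 u]
    · simp only [h, if_neg, not_false_iff, add_zero]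
      have := Real.add_one_le_exp (c * A u)
      nlinarith [hp0 u]
  have hsum := Finset.sum_le_sum key
  rw [Finset.sum_add_distrib] at hsum
  have h1 : ∑ u, p u * (1 + c * A u) = 1 := by
    have : ∀ u, p u * (1 + c * A u) = p u + c * (p u * A u) := by intro u; ring
    simp_rw [this]
    rw [Finset.sum_add_distrib, hp1, ← Finset.mul_sum, hA, mul_zero, add_zero]
  have h2 : ∑ u, (if A u = M then p u * ((c * M) ^ 2 / 2) else 0)
      = (∑ u ∈ Finset.univ.filter (fun u => A u = M), p u) / 2 * (c * M) ^ 2 := by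
    rw [← Finset.sum_filter, ← Finset.sum_mul]
    ring
  rw [h1, h2] at hsum
  exact hsum
end

section
/- Let U be a nonempty finite set, p a probability mass function on U, A : U → ℝ with Σ_{u∈U} p(u) A(u) = 0, and c ≥ 0 a real number. Let A* = max_{u∈U} A(u) and a = Σ_{u : A(u) = A*} p(u). If (a/2) · (c · A*)² ≤ 1/2, then log(Σ_{u∈U} p(u) · exp(c · A(u))) ≥ (a/3) · (c · A*)². -/
/-- Logarithmic lower bound on the normalizing constant of the exponential-tilt
update, valid when the Taylor term is at most 1/2. -/
theorem log_normalizer_lower_bound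
    {U : Type*} [Fintype U] [Nonempty U]
    (p : U → ℝ) (hp0 : ∀ u, 0 ≤ p u) (hp1 : ∑ u, p u = 1)
    (A : U → ℝ) (hA : ∑ u, p u * A u = 0)
    (c : ℝ) (hc : 0 ≤ c)
    (hsmall : (∑ u ∈ Finset.univ.filter
          (fun u => A u = Finset.univ.sup' Finset.univ_nonempty A), p u) / 2 *
        (c * Finset.univ.sup' Finset.univ_nonempty A) ^ 2 ≤ 1 / 2) :
    (∑ u ∈ Finset.univ.filter
          (fun u => A u = Finset.univ.sup' Finset.univ_nonempty A), p u) / 3 *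
        (c * Finset.univ.sup' Finset.univ_nonempty A) ^ 2
      ≤ Real.log (∑ u, p u * Real.exp (c * A u)) := by
  classical
  set M := Finset.univ.sup' Finset.univ_nonempty A with hM
  set S := Finset.univ.filter (fun u => A u = M) with hS
  set a := ∑ u ∈ S, p u with ha
  have hAleM : ∀ u, A u ≤ M := fun u => Finset.le_sup' A (Finset.mem_univ u)
  -- M ≥ 0
  have hM0 : 0 ≤ M := by
    have h1 : ∑ u, p u * (M - A u) = M := by
      simp only [mul_sub]
      rw [Finset.sum_sub_distrib, hA, ← Finset.sum_mul, hp1]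
      ring
    have h2 : 0 ≤ ∑ u, p u * (M - A u) :=
      Finset.sum_nonneg fun u _ => mul_nonneg (hp0 u) (by linarith [hAleM u])
    linarith
  have ha0 : 0 ≤ a := Finset.sum_nonneg fun u _ => hp0 u
  set x := a / 2 * (c * M) ^ 2 with hx
  have hx0 : 0 ≤ x := by positivity
  have hx12 : x ≤ 1 / 2 := hsmall
  -- pointwise bound
  have hpt : ∀ u, p u * (1 + c * A u + (if u ∈ S then (c * M) ^ 2 / 2 else 0))
      ≤ p u * Real.exp (c * A u) := by
    intro u
    apply mul_le_mul_of_nonneg_left _ (hp0 u)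
    by_cases hu : u ∈ S
    · simp only [hu, if_true]
      have hAu : A u = M := by simpa [hS] using hu
      rw [hAu]
      exact Real.quadratic_le_exp_of_nonneg (mul_nonneg hc hM0)
    · simp only [hu, if_false]
      have := Real.add_one_le_exp (c * A u)
      linarith
  -- sum bound
  have hsum : 1 + x ≤ ∑ u, p u * Real.exp (c * A u) := by
    have h := Finset.sum_le_sum (s := Finset.univ) (fun u _ => hpt u)
    have hL : ∑ u, p u * (1 + c * A u + (if u ∈ S then (c * M) ^ 2 / 2 else 0))
        = 1 + x := by
      have : ∀ u, p u * (1 + c * A u + (if u ∈ S then (c * M) ^ 2 / 2 else 0))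
          = p u + c * (p u * A u) + (if u ∈ S then p u * ((c * M) ^ 2 / 2) else 0) := by
        intro u; by_cases hu : u ∈ S <;> simp [hu] <;> ring
      simp only [this]
      rw [Finset.sum_add_distrib, Finset.sum_add_distrib, hp1, ← Finset.mul_sum, hA,
        Finset.sum_ite_mem, Finset.univ_inter, ← Finset.sum_mul]
      rw [hx, ha]
      ring
    linarith
  have hpos : (0 : ℝ) < ∑ u, p u * Real.exp (c * A u) := by linarith
  rw [show a / 3 * (c * M) ^ 2 = 2 * x / 3 by rw [hx]; ring]
  rw [Real.le_log_iff_exp_le hpos]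
  -- exp(2x/3) ≤ 1 + x
  have key : Real.exp (2 * x / 3) ≤ 1 + x := by
    have h1 : 1 - 2 * x / 3 ≤ Real.exp (-(2 * x / 3)) := by
      have := Real.add_one_le_exp (-(2 * x / 3)); linarith
    have h2 : Real.exp (2 * x / 3) * (1 - 2 * x / 3) ≤ 1 := by
      calc Real.exp (2 * x / 3) * (1 - 2 * x / 3)
          ≤ Real.exp (2 * x / 3) * Real.exp (-(2 * x / 3)) :=
            mul_le_mul_of_nonneg_left h1 (Real.exp_pos _).le
        _ = 1 := by rw [← Real.exp_add]; simp
    have h3 : (0:ℝ) < 1 - 2 * x / 3 := by linarith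
    have h4 : (1 + x) * (1 - 2 * x / 3) ≥ 1 := by nlinarith
    nlinarith [Real.exp_pos (2 * x / 3)]
  linarith
end

section
/- Let U_1, …, U_n be nonempty finite sets and for each i let p_i and q_i be probability mass functions on U_i. Let F : U_1 × ⋯ × U_n → ℝ. For each i and each u_i ∈ U_i define Ã_i(u_i) = Σ_{u_{-i}} (∏_{j<i} q_j(u_j)) (∏_{j>i} p_j(u_j)) F(u), where the sum runs over all choices of u_j ∈ U_j for j ≠ i. Then Σ_u (∏_i q_i(u_i) − ∏_i p_i(u_i)) F(u) = Σ_{i=1}^n Σ_{u_i ∈ U_i} (q_i(u_i) − p_i(u_i)) Ã_i(u_i). -/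
set_option maxRecDepth 8000 in
set_option maxHeartbeats 1000000 in
/-- The difference of expectations of `F` under two product distributions
decomposes into a sum over agents of per-agent policy differences weighted by
the mixed local advantage functions. -/
theorem product_diff_decomposition
    {n : ℕ} {U : Fin n → Type*} [∀ i, Fintype (U i)] [∀ i, Nonempty (U i)]
    [∀ i, DecidableEq (U i)]
    (p q : ∀ i, U i → ℝ)
    (hp0 : ∀ i, ∀ x : U i, 0 ≤ p i x) (hp1 : ∀ i, ∑ x : U i, p i x = 1)
    (hq0 : ∀ i, ∀ x : U i, 0 ≤ q i x) (hq1 : ∀ i, ∑ x : U i, q i x = 1)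
    (F : (∀ i, U i) → ℝ)
    (Atil : ∀ i, U i → ℝ)
    (hAtil : ∀ i, ∀ x : U i, Atil i x =
      ∑ u : ∀ j, U j, if u i = x then
          (∏ j ∈ Finset.univ.filter (fun j => j < i), q j (u j)) *
            (∏ j ∈ Finset.univ.filter (fun j => i < j), p j (u j)) * F u
        else 0) :
    ∑ u : ∀ i, U i, ((∏ i, q i (u i)) - ∏ i, p i (u i)) * F u
      = ∑ i, ∑ x : U i, (q i x - p i x) * Atil i x := by
  set H : ℕ → ℝ := fun k => ∑ u : ∀ i, U i,
    (∏ j ∈ Finset.univ.filter (fun j : Fin n => (j : ℕ) < k), q j (u j)) *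
    (∏ j ∈ Finset.univ.filter (fun j : Fin n => k ≤ (j : ℕ)), p j (u j)) * F u with hH
  have h0 : H 0 = ∑ u : ∀ i, U i, (∏ i, p i (u i)) * F u := by
    simp [hH]
  have hn : H n = ∑ u : ∀ i, U i, (∏ i, q i (u i)) * F u := by
    have e1 : Finset.univ.filter (fun j : Fin n => (j : ℕ) < n) = Finset.univ := by
      ext j; simp [j.isLt]
    have e2 : Finset.univ.filter (fun j : Fin n => n ≤ (j : ℕ)) = ∅ := by
      ext j; simp [Nat.not_le.mpr j.isLt]
    simp [hH, e1, e2]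
  have hR : ∀ i : Fin n, ∑ x : U i, (q i x - p i x) * Atil i x
      = ∑ u : ∀ j, U j, (q i (u i) - p i (u i)) *
          ((∏ j ∈ Finset.univ.filter (fun j : Fin n => j < i), q j (u j)) *
           (∏ j ∈ Finset.univ.filter (fun j : Fin n => i < j), p j (u j)) * F u) := by
    intro i
    simp only [hAtil, Finset.mul_sum]
    rw [Finset.sum_comm]
    refine Finset.sum_congr rfl fun u _ => ?_
    simp [mul_ite, mul_zero, Finset.sum_ite_eq]
  have key : ∀ i : Fin n, H ((i : ℕ) + 1) - H (i : ℕ)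
      = ∑ x : U i, (q i x - p i x) * Atil i x := by
    intro i
    have hfilt1 : Finset.univ.filter (fun j : Fin n => (j : ℕ) < (i : ℕ) + 1)
        = insert i (Finset.univ.filter (fun j : Fin n => j < i)) := by
      ext j
      simp only [Finset.mem_filter, Finset.mem_insert, Finset.mem_univ, true_and,
        Fin.lt_def, Fin.ext_iff]
      omega
    have hfilt2 : Finset.univ.filter (fun j : Fin n => (i : ℕ) + 1 ≤ (j : ℕ))
        = Finset.univ.filter (fun j : Fin n => i < j) := by
      ext j
      simp only [Finset.mem_filter, Finset.mem_univ, true_and, Fin.lt_def]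
      omega
    have hfilt3 : Finset.univ.filter (fun j : Fin n => (i : ℕ) ≤ (j : ℕ))
        = insert i (Finset.univ.filter (fun j : Fin n => i < j)) := by
      ext j
      simp only [Finset.mem_filter, Finset.mem_insert, Finset.mem_univ, true_and,
        Fin.lt_def, Fin.ext_iff]
      omega
    have hfilt4 : Finset.univ.filter (fun j : Fin n => (j : ℕ) < (i : ℕ))
        = Finset.univ.filter (fun j : Fin n => j < i) := by
      ext j
      simp only [Finset.mem_filter, Finset.mem_univ, true_and, Fin.lt_def]
    have hni : i ∉ Finset.univ.filter (fun j : Fin n => j < i) := by simp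
    have hni2 : i ∉ Finset.univ.filter (fun j : Fin n => i < j) := by simp
    rw [hR i]
    simp only [hH, hfilt1, hfilt2, hfilt3, hfilt4,
      Finset.prod_insert hni, Finset.prod_insert hni2, ← Finset.sum_sub_distrib]
    refine Finset.sum_congr rfl fun u _ => ?_
    ring
  have tele : H n - H 0 = ∑ i : Fin n, (H ((i : ℕ) + 1) - H (i : ℕ)) := by
    rw [Fin.sum_univ_eq_sum_range (fun k => H (k + 1) - H k), Finset.sum_range_sub]
  calc ∑ u : ∀ i, U i, ((∏ i, q i (u i)) - ∏ i, p i (u i)) * F u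
      = (∑ u : ∀ i, U i, (∏ i, q i (u i)) * F u)
        - ∑ u : ∀ i, U i, (∏ i, p i (u i)) * F u := by
        rw [← Finset.sum_sub_distrib]
        exact Finset.sum_congr rfl fun u _ => by ring
    _ = H n - H 0 := by rw [h0, hn]
    _ = ∑ i : Fin n, (H ((i : ℕ) + 1) - H (i : ℕ)) := tele
    _ = ∑ i, ∑ x : U i, (q i x - p i x) * Atil i x :=
        Finset.sum_congr rfl fun i _ => key i
end

section
/- Let U_1, …, U_n be nonempty finite sets and for each i let p_i and q_i be probability mass functions on U_i. Let F : U_1 × ⋯ × U_n → ℝ satisfy |F(u)| ≤ M for all u. For each i and u_i ∈ U_i define Ã_i(u_i) = Σ_{u_{-i}} (∏_{j<i} q_j(u_j)) (∏_{j>i} p_j(u_j)) F(u) and A_i(u_i) = Σ_{u_{-i}} (∏_{j≠i} p_j(u_j)) F(u). Then for every i and every u_i ∈ U_i, |Ã_i(u_i) − A_i(u_i)| ≤ M · Σ_{j=1}^n ‖q_j − p_j‖_1, where ‖q_j − p_j‖_1 = Σ_{u_j ∈ U_j} |q_j(u_j) − p_j(u_j)|. -/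
open Finset

/-- Sum over the pi type of a product of per-coordinate functions equals the
product of the per-coordinate sums. -/
lemma sum_pi_prod_eq {n : ℕ} {U : Fin n → Type*} [∀ i, Fintype (U i)]
    (g : ∀ j, U j → ℝ) :
    ∑ u : ∀ j, U j, ∏ j, g j (u j) = ∏ j, ∑ y : U j, g j y :=
  (Fintype.prod_sum g).symm

/-- Telescoping bound: replacing the per-coordinate weights `b` by `a` on a set
`S` of coordinates changes the weighted sum by at most `M` times the cumulative
ℓ1 distance over `S`. -/
lemma telescope_bound {n : ℕ} {U : Fin n → Type*} [∀ i, Fintype (U i)]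
    (a b : ∀ j, U j → ℝ) (M : ℝ) (hM : 0 ≤ M)
    (ha0 : ∀ j y, 0 ≤ a j y) (hb0 : ∀ j y, 0 ≤ b j y)
    (ha1 : ∀ j, ∑ y : U j, a j y = 1) (hb1 : ∀ j, ∑ y : U j, b j y = 1)
    (F : (∀ j, U j) → ℝ) (hF : ∀ u, |F u| ≤ M) :
    ∀ S : Finset (Fin n),
      |(∑ u : ∀ j, U j, (∏ j ∈ S, a j (u j)) * (∏ j ∈ Sᶜ, b j (u j)) * F u)
        - ∑ u : ∀ j, U j, (∏ j, b j (u j)) * F u|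
        ≤ M * ∑ j ∈ S, ∑ y : U j, |a j y - b j y| := by
  intro S
  induction S using Finset.induction with
  | empty =>
      simp
  | @insert k S hk ih =>
      set T : Finset (Fin n) := insert k S with hT
      have hkc : k ∈ Sᶜ := by simp [hk]
      have hScompl : Sᶜ = insert k Tᶜ := by
        ext j
        by_cases hjk : j = k <;> simp [hT, hjk, hk]
      have hknotTc : k ∉ Tᶜ := by simp [hT]
      -- difference between step T and step S
      have hstep : ∀ u : ∀ j, U j,
          (∏ j ∈ T, a j (u j)) * (∏ j ∈ Tᶜ, b j (u j)) * F u
          - (∏ j ∈ S, a j (u j)) * (∏ j ∈ Sᶜ, b j (u j)) * F u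
          = (∏ j ∈ S, a j (u j)) * ((a k (u k) - b k (u k))
              * (∏ j ∈ Tᶜ, b j (u j))) * F u := by
        intro u
        rw [hT, Finset.prod_insert hk, hScompl, Finset.prod_insert hknotTc]
        ring
      have habs : ∀ u : ∀ j, U j,
          |(∏ j ∈ S, a j (u j)) * ((a k (u k) - b k (u k))
              * (∏ j ∈ Tᶜ, b j (u j))) * F u|
          ≤ (∏ j ∈ S, a j (u j)) * (|a k (u k) - b k (u k)|
              * (∏ j ∈ Tᶜ, b j (u j))) * M := by
        intro u
        rw [abs_mul, abs_mul, abs_mul]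
        have h1 : |∏ j ∈ S, a j (u j)| = ∏ j ∈ S, a j (u j) :=
          abs_of_nonneg (Finset.prod_nonneg fun j _ => ha0 j (u j))
        have h2 : |∏ j ∈ Tᶜ, b j (u j)| = ∏ j ∈ Tᶜ, b j (u j) :=
          abs_of_nonneg (Finset.prod_nonneg fun j _ => hb0 j (u j))
        rw [h1, h2]
        apply mul_le_mul_of_nonneg_left (hF u)
        exact mul_nonneg (Finset.prod_nonneg fun j _ => ha0 j (u j))
          (mul_nonneg (abs_nonneg _) (Finset.prod_nonneg fun j _ => hb0 j (u j)))
      -- the sum of the dominating weights equals the ℓ1 distance at k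
      have hsum : ∑ u : ∀ j, U j,
          (∏ j ∈ S, a j (u j)) * (|a k (u k) - b k (u k)|
              * (∏ j ∈ Tᶜ, b j (u j)))
          = ∑ y : U k, |a k y - b k y| := by
        classical
        set g : ∀ j, U j → ℝ := fun j y =>
          if j = k then |a j y - b j y| else if j ∈ S then a j y else b j y with hg
        have e1 : ∀ u : ∀ j, U j, ∏ j ∈ S, g j (u j) = ∏ j ∈ S, a j (u j) := by
          intro u
          apply Finset.prod_congr rfl
          intro j hj
          have hjk : j ≠ k := fun h => hk (h ▸ hj)
          simp [hg, hjk, hj]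
        have e2 : ∀ u : ∀ j, U j, ∏ j ∈ Tᶜ, g j (u j) = ∏ j ∈ Tᶜ, b j (u j) := by
          intro u
          apply Finset.prod_congr rfl
          intro j hj
          rw [Finset.mem_compl, hT, Finset.mem_insert] at hj
          push_neg at hj
          simp [hg, hj.1, hj.2]
        have hgk : ∀ y : U k, g k y = |a k y - b k y| := by
          intro y; simp [hg]
        have hrw : ∀ u : ∀ j, U j,
            (∏ j ∈ S, a j (u j)) * (|a k (u k) - b k (u k)|
                * (∏ j ∈ Tᶜ, b j (u j))) = ∏ j, g j (u j) := by
          intro u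
          have hsplit : ∏ j, g j (u j)
              = (∏ j ∈ Tᶜ, g j (u j)) * ∏ j ∈ T, g j (u j) :=
            (Finset.prod_compl_mul_prod T _).symm
          rw [hsplit, e2 u, hT, Finset.prod_insert hk, e1 u, hgk]
          ring
        have hfac : ∀ j, (∑ y : U j, g j y)
            = if j = k then ∑ y : U k, |a k y - b k y| else 1 := by
          intro j
          by_cases hj : j = k
          · subst hj; simp [hgk]
          · by_cases hjS : j ∈ S <;> simp [hg, hj, hjS, ha1, hb1]
        rw [Finset.sum_congr rfl fun u _ => hrw u, sum_pi_prod_eq g,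
          Finset.prod_congr rfl fun j _ => hfac j]
        simp
      -- put everything together
      have hdiff : |(∑ u : ∀ j, U j, (∏ j ∈ T, a j (u j)) * (∏ j ∈ Tᶜ, b j (u j)) * F u)
          - ∑ u : ∀ j, U j, (∏ j ∈ S, a j (u j)) * (∏ j ∈ Sᶜ, b j (u j)) * F u|
          ≤ M * ∑ y : U k, |a k y - b k y| := by
        rw [← Finset.sum_sub_distrib]
        calc |∑ u : ∀ j, U j, ((∏ j ∈ T, a j (u j)) * (∏ j ∈ Tᶜ, b j (u j)) * F u
              - (∏ j ∈ S, a j (u j)) * (∏ j ∈ Sᶜ, b j (u j)) * F u)|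
            ≤ ∑ u : ∀ j, U j, |(∏ j ∈ T, a j (u j)) * (∏ j ∈ Tᶜ, b j (u j)) * F u
              - (∏ j ∈ S, a j (u j)) * (∏ j ∈ Sᶜ, b j (u j)) * F u| :=
              Finset.abs_sum_le_sum_abs _ _
          _ ≤ ∑ u : ∀ j, U j, (∏ j ∈ S, a j (u j)) * (|a k (u k) - b k (u k)|
              * (∏ j ∈ Tᶜ, b j (u j))) * M := by
              apply Finset.sum_le_sum
              intro u _
              rw [hstep u]
              exact habs u
          _ = (∑ u : ∀ j, U j, (∏ j ∈ S, a j (u j)) * (|a k (u k) - b k (u k)|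
              * (∏ j ∈ Tᶜ, b j (u j)))) * M := by rw [← Finset.sum_mul]
          _ = M * ∑ y : U k, |a k y - b k y| := by rw [hsum]; ring
      calc |(∑ u : ∀ j, U j, (∏ j ∈ T, a j (u j)) * (∏ j ∈ Tᶜ, b j (u j)) * F u)
          - ∑ u : ∀ j, U j, (∏ j, b j (u j)) * F u|
          ≤ |(∑ u : ∀ j, U j, (∏ j ∈ T, a j (u j)) * (∏ j ∈ Tᶜ, b j (u j)) * F u)
              - ∑ u : ∀ j, U j, (∏ j ∈ S, a j (u j)) * (∏ j ∈ Sᶜ, b j (u j)) * F u|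
            + |(∑ u : ∀ j, U j, (∏ j ∈ S, a j (u j)) * (∏ j ∈ Sᶜ, b j (u j)) * F u)
              - ∑ u : ∀ j, U j, (∏ j, b j (u j)) * F u| := abs_sub_le _ _ _
        _ ≤ M * (∑ y : U k, |a k y - b k y|)
            + M * ∑ j ∈ S, ∑ y : U j, |a j y - b j y| := add_le_add hdiff ih
        _ = M * ∑ j ∈ T, ∑ y : U j, |a j y - b j y| := by
            rw [hT, Finset.sum_insert hk]; ring

/-- The discrepancy between the mixed-policy local advantage and the
current-policy local advantage is bounded by `M` times the cumulative ℓ1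
policy change across agents. -/
theorem mixed_advantage_discrepancy_bound
    {n : ℕ} {U : Fin n → Type*} [∀ i, Fintype (U i)] [∀ i, Nonempty (U i)]
    [∀ i, DecidableEq (U i)]
    (p q : ∀ i, U i → ℝ) (M : ℝ)
    (hp0 : ∀ i, ∀ x : U i, 0 ≤ p i x) (hp1 : ∀ i, ∑ x : U i, p i x = 1)
    (hq0 : ∀ i, ∀ x : U i, 0 ≤ q i x) (hq1 : ∀ i, ∑ x : U i, q i x = 1)
    (F : (∀ i, U i) → ℝ) (hF : ∀ u, |F u| ≤ M)
    (Atil A : ∀ i, U i → ℝ)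
    (hAtil : ∀ i, ∀ x : U i, Atil i x =
      ∑ u : ∀ j, U j, if u i = x then
          (∏ j ∈ Finset.univ.filter (fun j => j < i), q j (u j)) *
            (∏ j ∈ Finset.univ.filter (fun j => i < j), p j (u j)) * F u
        else 0)
    (hA : ∀ i, ∀ x : U i, A i x =
      ∑ u : ∀ j, U j, if u i = x then
          (∏ j ∈ Finset.univ.filter (fun j => j ≠ i), p j (u j)) * F u
        else 0) :
    ∀ i, ∀ x : U i,
      |Atil i x - A i x| ≤ M * ∑ j, ∑ y : U j, |q j y - p j y| := by
  classical
  intro i x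
  -- nonnegativity of M
  have hne : Nonempty (∀ j, U j) := ⟨fun j => Classical.arbitrary _⟩
  obtain ⟨u0⟩ := hne
  have hM : 0 ≤ M := le_trans (abs_nonneg (F u0)) (hF u0)
  -- the per-coordinate weights
  set c : ∀ j, U j → ℝ := fun j y =>
    if h : j = i then (if h ▸ y = x then 1 else 0)
    else if j < i then q j y else p j y with hc
  set d : ∀ j, U j → ℝ := fun j y =>
    if h : j = i then (if h ▸ y = x then 1 else 0) else p j y with hd
  have hci : ∀ y : U i, c i y = if y = x then 1 else 0 := by
    intro y; rw [hc]; simp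
  have hdi : ∀ y : U i, d i y = if y = x then 1 else 0 := by
    intro y; rw [hd]; simp
  have hcne : ∀ j, j ≠ i → ∀ y : U j, c j y = if j < i then q j y else p j y := by
    intro j hj y; rw [hc]; simp [hj]
  have hdne : ∀ j, j ≠ i → ∀ y : U j, d j y = p j y := by
    intro j hj y; rw [hd]; simp [hj]
  have hc0 : ∀ j y, 0 ≤ c j y := by
    intro j y
    by_cases hj : j = i
    · subst hj; rw [hci]; split_ifs <;> norm_num
    · rw [hcne j hj]; split_ifs; exacts [hq0 j y, hp0 j y]
  have hd0 : ∀ j y, 0 ≤ d j y := by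
    intro j y
    by_cases hj : j = i
    · subst hj; rw [hdi]; split_ifs <;> norm_num
    · rw [hdne j hj]; exact hp0 j y
  have hc1 : ∀ j, ∑ y : U j, c j y = 1 := by
    intro j
    by_cases hj : j = i
    · subst hj
      rw [Finset.sum_congr rfl fun y _ => hci y]
      simp
    · rw [Finset.sum_congr rfl fun y _ => hcne j hj y]
      split_ifs; exacts [hq1 j, hp1 j]
  have hd1 : ∀ j, ∑ y : U j, d j y = 1 := by
    intro j
    by_cases hj : j = i
    · subst hj
      rw [Finset.sum_congr rfl fun y _ => hdi y]
      simp
    · rw [Finset.sum_congr rfl fun y _ => hdne j hj y]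
      exact hp1 j
  -- rewrite Atil in the telescoped form
  have hcompl : ({i}ᶜ : Finset (Fin n))
      = (Finset.univ.filter (fun j => j < i)) ∪ (Finset.univ.filter (fun j => i < j)) := by
    ext j
    simp only [Finset.mem_compl, Finset.mem_singleton, Finset.mem_union,
      Finset.mem_filter, Finset.mem_univ, true_and]
    constructor
    · exact fun h => lt_or_gt_of_ne h
    · rintro (h | h)
      · exact ne_of_lt h
      · exact ne_of_gt h
  have hdisj : Disjoint (Finset.univ.filter (fun j : Fin n => j < i))
      (Finset.univ.filter (fun j => i < j)) := by
    rw [Finset.disjoint_left]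
    intro j hj hj'
    rw [Finset.mem_filter] at hj hj'
    exact absurd hj'.2 (not_lt_of_gt hj.2)
  have hprodc : ∀ u : ∀ j, U j, ∏ j, c j (u j)
      = (if u i = x then 1 else 0) *
        ((∏ j ∈ Finset.univ.filter (fun j => j < i), q j (u j)) *
          (∏ j ∈ Finset.univ.filter (fun j => i < j), p j (u j))) := by
    intro u
    rw [Fintype.prod_eq_mul_prod_compl i, hci, hcompl, Finset.prod_union hdisj]
    congr 1
    congr 1
    · apply Finset.prod_congr rfl
      intro j hj
      rw [Finset.mem_filter] at hj
      rw [hcne j (ne_of_lt hj.2), if_pos hj.2]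
    · apply Finset.prod_congr rfl
      intro j hj
      rw [Finset.mem_filter] at hj
      rw [hcne j (ne_of_gt hj.2), if_neg (not_lt_of_gt hj.2)]
  have hprodd : ∀ u : ∀ j, U j, ∏ j, d j (u j)
      = (if u i = x then 1 else 0) *
        (∏ j ∈ Finset.univ.filter (fun j => j ≠ i), p j (u j)) := by
    intro u
    rw [Fintype.prod_eq_mul_prod_compl i, hdi]
    congr 1
    have : ({i}ᶜ : Finset (Fin n)) = Finset.univ.filter (fun j => j ≠ i) := by
      ext j; simp
    rw [this]
    apply Finset.prod_congr rfl
    intro j hj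
    rw [Finset.mem_filter] at hj
    exact hdne j hj.2 (u j)
  have hAtil' : Atil i x = ∑ u : ∀ j, U j,
      (∏ j ∈ (Finset.univ : Finset (Fin n)), c j (u j)) *
        (∏ j ∈ (Finset.univ : Finset (Fin n))ᶜ, d j (u j)) * F u := by
    rw [hAtil i x]
    apply Finset.sum_congr rfl
    intro u _
    rw [Finset.compl_univ, Finset.prod_empty, mul_one]
    rw [show (∏ j ∈ (Finset.univ : Finset (Fin n)), c j (u j)) = ∏ j, c j (u j) from rfl,
      hprodc u]
    by_cases h : u i = x <;> simp [h] <;> ring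
  have hA' : A i x = ∑ u : ∀ j, U j, (∏ j, d j (u j)) * F u := by
    rw [hA i x]
    apply Finset.sum_congr rfl
    intro u _
    rw [hprodd u]
    by_cases h : u i = x <;> simp [h] <;> ring
  have key := telescope_bound c d M hM hc0 hd0 hc1 hd1 F hF Finset.univ
  rw [← hAtil', ← hA'] at key
  refine key.trans ?_
  apply mul_le_mul_of_nonneg_left ?_ hM
  apply Finset.sum_le_sum
  intro j _
  by_cases hj : j = i
  · subst hj
    have : ∀ y : U j, |c j y - d j y| = 0 := by
      intro y; rw [hci, hdi]; simp
    rw [Finset.sum_congr rfl fun y _ => this y]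
    simp only [Finset.sum_const_zero]
    exact Finset.sum_nonneg fun y _ => abs_nonneg _
  · by_cases hlt : j < i
    · have : ∀ y : U j, |c j y - d j y| = |q j y - p j y| := by
        intro y; rw [hcne j hj, hdne j hj, if_pos hlt]
      exact le_of_eq (Finset.sum_congr rfl fun y _ => this y)
    · have : ∀ y : U j, |c j y - d j y| = 0 := by
        intro y; rw [hcne j hj, hdne j hj, if_neg hlt]; simp
      rw [Finset.sum_congr rfl fun y _ => this y]
      simp only [Finset.sum_const_zero]
      exact Finset.sum_nonneg fun y _ => abs_nonneg _
end

section
/- Let U_1, …, U_n be nonempty finite sets and for each i let p_i and q_i be probability mass functions on U_i with p_i(u) > 0 for all u ∈ U_i. Let F : U_1 × ⋯ × U_n → ℝ satisfy |F(u)| ≤ M for all u. For each i and u_i ∈ U_i define Ã_i(u_i) = Σ_{u_{-i}} (∏_{j<i} q_j(u_j)) (∏_{j>i} p_j(u_j)) F(u) and A_i(u_i) = Σ_{u_{-i}} (∏_{j≠i} p_j(u_j)) F(u). Then Σ_{i=1}^n Σ_{u_i ∈ U_i} (q_i(u_i) − p_i(u_i)) (Ã_i(u_i) − A_i(u_i))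 ≤ 2 n M · Σ_{j=1}^n KL(q_j ‖ p_j), where KL(q ‖ p) = Σ_u q(u) log(q(u)/p(u)). -/
/-!
Ã_i(x) − A_i(x) is the integral of `F` against the difference of two product weights on the
coordinates `j ≠ i`, which differ only in the coordinates `j < i` (`q_j` against `p_j`). Replacing
one coordinate at a time shows that the ℓ¹ distance of two products of probability vectors is at
most the sum of the coordinatewise ℓ¹ distances, so `|Ã_i(x) − A_i(x)| ≤ M S` with
`S = ∑_j ‖q_j − p_j‖₁`. Hence the cross term is at most `M S²`, then `S² ≤ n ∑_j ‖q_j − p_j‖₁²` by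
Cauchy–Schwarz, and each `‖q_j − p_j‖₁²` is at most `2 KL(q_j ‖ p_j)` by Pinsker's inequality.
-/

open Real Finset Function InformationTheory

theorem three_mul_sq_sub_one_le_klFun {x : ℝ} (hx : 0 ≤ x) :
    3 * (x - 1) ^ 2 ≤ 2 * (x + 2) * klFun x := by
  set h : ℝ → ℝ := fun x => 2 * (x + 2) * klFun x - 3 * (x - 1) ^ 2
  have h' : ∀ x ≠ 0, HasDerivAt h (4 * ((x + 1) * log x - 2 * (x - 1))) x := fun x hx => by
    have := ((((hasDerivAt_id x).add_const 2).const_mul 2).mul (hasDerivAt_klFun hx)).sub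
      ((((hasDerivAt_id x).sub_const 1).pow 2).const_mul 3)
    refine this.congr_deriv ?_
    simp only [klFun_apply, mul_one, id_eq, Nat.cast_ofNat, Nat.add_one_sub_one, pow_one]
    ring
  have h'' : ∀ x ≠ 0, HasDerivAt (fun x => 4 * ((x + 1) * log x - 2 * (x - 1)))
      (4 * (log x + x⁻¹ - 1)) x := fun x hx => by
    have := ((((hasDerivAt_id x).add_const 1).mul (hasDerivAt_log hx)).sub
      (((hasDerivAt_id x).sub_const 1).const_mul 2)).const_mul 4
    refine this.congr_deriv ?_
    simp only [one_mul, id_eq, mul_one]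
    field_simp
    ring
  have hconvex : ConvexOn ℝ (Set.Ici 0) h := by
    refine convexOn_of_hasDerivWithinAt2_nonneg (convex_Ici 0) (by fun_prop)
      (fun x hx => (h' x ?_).hasDerivWithinAt) (fun x hx => (h'' x ?_).hasDerivWithinAt)
      fun x hx => ?_
    all_goals rw [interior_Ici] at hx
    · exact hx.ne'
    · exact hx.ne'
    · linarith [one_sub_inv_le_log_of_pos hx]
  -- `h` is convex with `h 1 = h' 1 = 0`, hence minimal at `1`.
  have hmin : IsMinOn h (Set.Ici 0) 1 := by
    refine hconvex.isMinOn_of_rightDeriv_eq_zero (by simp) ?_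
    have := (h' 1 one_ne_zero).hasDerivWithinAt (s := Set.Ioi 1)
    rw [this.derivWithin (uniqueDiffWithinAt_Ioi 1)]
    simp
  have := hmin (Set.mem_Ici.2 hx)
  simp only [h, klFun_one, Set.mem_ofPred_eq] at this
  linarith

theorem three_mul_sq_sub_le_mul_log_div {p q : ℝ} (hp : 0 < p) (hq : 0 ≤ q) :
    3 * (q - p) ^ 2 ≤ 2 * (q + 2 * p) * (q * log (q / p) + p - q) := by
  obtain ⟨t, ht, rfl⟩ : ∃ t, 0 ≤ t ∧ q = p * t := ⟨q / p, div_nonneg hq hp.le, by field_simp⟩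
  have key := three_mul_sq_sub_one_le_klFun ht
  rw [klFun_apply] at key
  rw [mul_div_cancel_left₀ _ hp.ne']
  linear_combination p ^ 2 * key

/-- Pinsker's inequality, by Cauchy–Schwarz against the weights `q + 2p` of total mass `3`. -/
theorem sq_sum_abs_sub_le_two_mul_sum_mul_log {α : Type*} [Fintype α] {p q : α → ℝ}
    (hp0 : ∀ x, 0 < p x) (hp1 : ∑ x, p x = 1) (hq : q ∈ stdSimplex ℝ α) :
    (∑ x, |q x - p x|) ^ 2 ≤ 2 * ∑ x, q x * log (q x / p x) := by
  obtain ⟨hq0, hq1⟩ := hq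
  have hpos : ∀ x, 0 < q x + 2 * p x := fun x => by linarith [hp0 x, hq0 x]
  have hmass : ∑ x, (q x + 2 * p x) = 3 := by
    rw [sum_add_distrib, ← mul_sum, hp1, hq1]; norm_num
  calc (∑ x, |q x - p x|) ^ 2 = 3 * ((∑ x, |q x - p x|) ^ 2 / ∑ x, (q x + 2 * p x)) := by
        rw [hmass]; field_simp
    _ ≤ 3 * ∑ x, |q x - p x| ^ 2 / (q x + 2 * p x) := by
        gcongr; exact sq_sum_div_le_sum_sq_div _ _ fun x _ => hpos x
    _ ≤ ∑ x, 2 * (q x * log (q x / p x) + p x - q x) := by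
        rw [mul_sum]
        refine sum_le_sum fun x _ => ?_
        rw [sq_abs, ← mul_div_assoc, div_le_iff₀ (hpos x)]
        linarith [three_mul_sq_sub_le_mul_log_div (hp0 x) (hq0 x)]
    _ = 2 * ∑ x, q x * log (q x / p x) := by
        simp only [← mul_sum, sum_sub_distrib, sum_add_distrib, hp1, hq1, add_sub_cancel_right]

section ProductWeights

variable {ι : Type*} [Fintype ι] [DecidableEq ι] {κ : ι → Type*}

theorem prod_update_apply {R : Type*} [CommMonoid R] (c : ∀ j, κ j → R) (k : ι) (d : κ k → R)
    (u : ∀ j, κ j) :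
    ∏ j, update c k d j (u j) = d (u k) * ∏ j ∈ univ.erase k, c j (u j) := by
  rw [← mul_prod_erase univ _ (mem_univ k), update_self]
  congr 1
  exact prod_congr rfl fun j hj => by rw [update_of_ne (ne_of_mem_erase hj)]

variable [∀ j, Fintype (κ j)]

theorem sum_prod_update {R : Type*} [CommSemiring R] (c : ∀ j, κ j → R) (k : ι) (d : κ k → R) :
    ∑ u : ∀ j, κ j, ∏ j, update c k d j (u j) = (∑ y, d y) * ∏ j ∈ univ.erase k, ∑ y, c j y := by
  rw [← Fintype.prod_sum, ← mul_prod_erase univ _ (mem_univ k), update_self]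
  congr 1
  exact prod_congr rfl fun j hj => by rw [update_of_ne (ne_of_mem_erase hj)]

theorem sum_abs_prod_sub_prod_update {c : ∀ j, κ j → ℝ}
    (hc : ∀ j, c j ∈ stdSimplex ℝ (κ j)) (k : ι) (d : κ k → ℝ) :
    ∑ u : ∀ j, κ j, |∏ j, c j (u j) - ∏ j, update c k d j (u j)| = ∑ y, |c k y - d y| := by
  have hdiff : ∀ u : ∀ j, κ j, |∏ j, c j (u j) - ∏ j, update c k d j (u j)|
      = ∏ j, update c k (fun y => |c k y - d y|) j (u j) := fun u => by
    rw [← mul_prod_erase univ (fun j => c j (u j)) (mem_univ k), prod_update_apply,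
      prod_update_apply, ← sub_mul, abs_mul,
      abs_of_nonneg (prod_nonneg fun j _ => (hc j).1 _)]
  simp_rw [hdiff, sum_prod_update, fun j => (hc j).2, prod_const_one, mul_one]

theorem sum_abs_prod_sub_prod_le {a b : ∀ j, κ j → ℝ} (ha : ∀ j, a j ∈ stdSimplex ℝ (κ j))
    (hb : ∀ j, b j ∈ stdSimplex ℝ (κ j)) :
    ∑ u : ∀ j, κ j, |∏ j, a j (u j) - ∏ j, b j (u j)| ≤ ∑ j, ∑ y, |a j y - b j y| := by
  suffices ∀ s : Finset ι, ∀ a : ∀ j, κ j → ℝ, (∀ j, a j ∈ stdSimplex ℝ (κ j)) →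
      (∀ j ∉ s, a j = b j) →
      ∑ u : ∀ j, κ j, |∏ j, a j (u j) - ∏ j, b j (u j)| ≤ ∑ j ∈ s, ∑ y, |a j y - b j y| from
    this univ a ha fun j hj => absurd (mem_univ j) hj
  intro s
  induction s using Finset.induction_on with
  | empty =>
    intro a _ hab
    simp [funext fun j => hab j (notMem_empty j)]
  | insert k s hk ih =>
    intro a ha hab
    have ha' : ∀ j, update a k (b k) j ∈ stdSimplex ℝ (κ j) :=
      (forall_update_iff a fun j c => c ∈ stdSimplex ℝ (κ j)).2 ⟨hb k, fun j _ => ha j⟩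
    have hab' : ∀ j ∉ s, update a k (b k) j = b j := by
      intro j hj
      rcases eq_or_ne j k with rfl | hjk
      · exact update_self ..
      · rw [update_of_ne hjk, hab j (by simp [hj, hjk])]
    calc ∑ u : ∀ j, κ j, |∏ j, a j (u j) - ∏ j, b j (u j)|
        ≤ ∑ u : ∀ j, κ j, (|∏ j, a j (u j) - ∏ j, update a k (b k) j (u j)|
            + |∏ j, update a k (b k) j (u j) - ∏ j, b j (u j)|) :=
          sum_le_sum fun u _ => abs_sub_le _ _ _
      _ ≤ ∑ y, |a k y - b k y| + ∑ j ∈ s, ∑ y, |update a k (b k) j y - b j y| := by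
          rw [sum_add_distrib, sum_abs_prod_sub_prod_update ha]
          gcongr
          exact ih _ ha' hab'
      _ = ∑ j ∈ insert k s, ∑ y, |a j y - b j y| := by
          rw [sum_insert hk]
          congr 1
          exact sum_congr rfl fun j hj => by rw [update_of_ne (ne_of_mem_of_not_mem hj hk)]

theorem abs_sum_prod_sub_prod_mul_le {a b : ∀ j, κ j → ℝ}
    (ha : ∀ j, a j ∈ stdSimplex ℝ (κ j)) (hb : ∀ j, b j ∈ stdSimplex ℝ (κ j))
    {F : (∀ j, κ j) → ℝ} {M : ℝ} (hM : 0 ≤ M) (hF : ∀ u, |F u| ≤ M) :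
    |∑ u : ∀ j, κ j, (∏ j, a j (u j) - ∏ j, b j (u j)) * F u|
      ≤ M * ∑ j, ∑ y, |a j y - b j y| :=
  calc |∑ u : ∀ j, κ j, (∏ j, a j (u j) - ∏ j, b j (u j)) * F u|
      ≤ ∑ u : ∀ j, κ j, |∏ j, a j (u j) - ∏ j, b j (u j)| * M := by
        refine (abs_sum_le_sum_abs _ _).trans (sum_le_sum fun u _ => ?_)
        rw [abs_mul]
        exact mul_le_mul_of_nonneg_left (hF u) (abs_nonneg _)
    _ ≤ M * ∑ j, ∑ y, |a j y - b j y| := by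
        rw [← sum_mul, mul_comm]
        exact mul_le_mul_of_nonneg_left (sum_abs_prod_sub_prod_le ha hb) hM

theorem sum_prod_update_single_mul [∀ j, DecidableEq (κ j)]
    (w : ∀ j, κ j → ℝ) (F : (∀ j, κ j) → ℝ) (i : ι) (x : κ i) :
    ∑ u : ∀ j, κ j, (∏ j, update w i (Pi.single x 1) j (u j)) * F u
      = ∑ u : ∀ j, κ j, if u i = x then (∏ j ∈ univ.erase i, w j (u j)) * F u else 0 := by
  refine sum_congr rfl fun u _ => ?_
  rw [prod_update_apply, Pi.single_apply]
  split_ifs <;> simp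

end ProductWeights

section OrderedProductWeights

variable {ι : Type*} [Fintype ι] [LinearOrder ι] {κ : ι → Type*} [∀ j, Fintype (κ j)]

theorem prod_erase_ite_lt {R : Type*} [CommMonoid R] (i : ι) (f g : ι → R) :
    ∏ j ∈ univ.erase i, (if j < i then f j else g j)
      = (∏ j ∈ univ.filter (fun j => j < i), f j) * ∏ j ∈ univ.filter (fun j => i < j), g j := by
  rw [prod_ite]
  congr 2 <;> ext j
  · simpa using fun h : j < i => h.ne
  · simpa [and_comm, eq_comm] using (lt_iff_le_and_ne (a := i) (b := j)).symm

theorem abs_sum_ite_hybrid_sub_le [∀ j, DecidableEq (κ j)] {p q : ∀ j, κ j → ℝ}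
    (hp : ∀ j, p j ∈ stdSimplex ℝ (κ j)) (hq : ∀ j, q j ∈ stdSimplex ℝ (κ j))
    {F : (∀ j, κ j) → ℝ} {M : ℝ} (hM : 0 ≤ M) (hF : ∀ u, |F u| ≤ M) (i : ι) (x : κ i) :
    |(∑ u : ∀ j, κ j, if u i = x then
          (∏ j ∈ univ.filter (fun j => j < i), q j (u j)) *
            (∏ j ∈ univ.filter (fun j => i < j), p j (u j)) * F u else 0)
      - ∑ u : ∀ j, κ j, if u i = x then
          (∏ j ∈ univ.filter (fun j => j ≠ i), p j (u j)) * F u else 0|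
      ≤ M * ∑ j, ∑ y, |q j y - p j y| := by
  set r : ∀ j, κ j → ℝ := fun j y => if j < i then q j y else p j y
  have hr : ∀ j, r j ∈ stdSimplex ℝ (κ j) := fun j => by
    by_cases hji : j < i
    · simpa [r, hji] using hq j
    · simpa [r, hji] using hp j
  have hδ : Pi.single x 1 ∈ stdSimplex ℝ (κ i) := single_mem_stdSimplex ℝ x
  have hupdate : ∀ w : ∀ j, κ j → ℝ, (∀ j, w j ∈ stdSimplex ℝ (κ j)) →
      ∀ j, update w i (Pi.single x 1) j ∈ stdSimplex ℝ (κ j) := fun w hw =>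
    (forall_update_iff w fun j c => c ∈ stdSimplex ℝ (κ j)).2 ⟨hδ, fun j _ => hw j⟩
  have hhybrid : (∑ u : ∀ j, κ j, if u i = x then
        (∏ j ∈ univ.filter (fun j => j < i), q j (u j)) *
          (∏ j ∈ univ.filter (fun j => i < j), p j (u j)) * F u else 0)
      = ∑ u : ∀ j, κ j, (∏ j, update r i (Pi.single x 1) j (u j)) * F u := by
    rw [sum_prod_update_single_mul]
    exact sum_congr rfl fun u _ => by rw [← prod_erase_ite_lt]
  rw [hhybrid, filter_ne', ← sum_prod_update_single_mul, ← sum_sub_distrib]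
  simp_rw [← sub_mul]
  refine (abs_sum_prod_sub_prod_mul_le (hupdate r hr) (hupdate p hp) hM hF).trans
    (mul_le_mul_of_nonneg_left (sum_le_sum fun j _ => ?_) hM)
  rcases eq_or_ne j i with rfl | hji
  · simp only [update_self, sub_self, abs_zero, sum_const_zero]
    exact sum_nonneg fun y _ => abs_nonneg _
  · rw [update_of_ne hji, update_of_ne hji]
    by_cases hlt : j < i
    · simp [r, hlt]
    · simpa [r, hlt] using sum_nonneg fun y _ => abs_nonneg (q j y - p j y)

end OrderedProductWeights

theorem cross_term_kl_bound_general
    {n : ℕ} {U : Fin n → Type*} [∀ i, Fintype (U i)]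
    [∀ i, DecidableEq (U i)]
    (p q : ∀ i, U i → ℝ) (M : ℝ)
    (hp0 : ∀ i, ∀ x : U i, 0 < p i x) (hp1 : ∀ i, ∑ x : U i, p i x = 1)
    (hq0 : ∀ i, ∀ x : U i, 0 ≤ q i x) (hq1 : ∀ i, ∑ x : U i, q i x = 1)
    (F : (∀ i, U i) → ℝ) (hF : ∀ u, |F u| ≤ M)
    (Atil A : ∀ i, U i → ℝ)
    (hAtil : ∀ i, ∀ x : U i, Atil i x =
      ∑ u : ∀ j, U j, if u i = x then
          (∏ j ∈ Finset.univ.filter (fun j => j < i), q j (u j)) *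
            (∏ j ∈ Finset.univ.filter (fun j => i < j), p j (u j)) * F u
        else 0)
    (hA : ∀ i, ∀ x : U i, A i x =
      ∑ u : ∀ j, U j, if u i = x then
          (∏ j ∈ Finset.univ.filter (fun j => j ≠ i), p j (u j)) * F u
        else 0) :
    ∑ i, ∑ x : U i, (q i x - p i x) * (Atil i x - A i x)
      ≤ 2 * n * M * ∑ j, ∑ y : U j, q j y * Real.log (q j y / p j y) := by
  have hp : ∀ i, p i ∈ stdSimplex ℝ (U i) := fun i => ⟨fun x => (hp0 i x).le, hp1 i⟩
  have hq : ∀ i, q i ∈ stdSimplex ℝ (U i) := fun i => ⟨hq0 i, hq1 i⟩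
  have hM : 0 ≤ M := by
    have : ∀ i, Nonempty (U i) := fun i =>
      univ_nonempty_iff.1 (nonempty_of_sum_ne_zero (f := p i) (by rw [hp1 i]; exact one_ne_zero))
    exact (abs_nonneg _).trans (hF (Classical.arbitrary _))
  set S := ∑ j, ∑ y, |q j y - p j y|
  have hadv : ∀ i x, |Atil i x - A i x| ≤ M * S := fun i x => by
    rw [hAtil, hA]
    exact abs_sum_ite_hybrid_sub_le hp hq hM hF i x
  calc ∑ i, ∑ x : U i, (q i x - p i x) * (Atil i x - A i x)
      ≤ ∑ i, ∑ x : U i, |q i x - p i x| * (M * S) := by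
        refine sum_le_sum fun i _ => sum_le_sum fun x _ => (le_abs_self _).trans ?_
        rw [abs_mul]
        exact mul_le_mul_of_nonneg_left (hadv i x) (abs_nonneg _)
    _ = M * S ^ 2 := by simp_rw [← sum_mul]; ring
    _ ≤ M * (n * ∑ i, (∑ y, |q i y - p i y|) ^ 2) := by
        gcongr
        simpa using sq_sum_le_card_mul_sum_sq (s := univ) (f := fun i => ∑ y, |q i y - p i y|)
    _ ≤ M * (n * ∑ i, 2 * ∑ y, q i y * log (q i y / p i y)) := by
        gcongr with i
        exact sq_sum_abs_sub_le_two_mul_sum_mul_log (hp0 i) (hp1 i) (hq i)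
    _ = 2 * n * M * ∑ j, ∑ y : U j, q j y * Real.log (q j y / p j y) := by
        rw [← mul_sum]; ring

/-- The cross term between per-agent policy differences and advantage
discrepancies is bounded by `2nM` times the sum of the KL divergences. -/
theorem cross_term_kl_bound
    {n : ℕ} {U : Fin n → Type*} [∀ i, Fintype (U i)] [∀ i, Nonempty (U i)]
    [∀ i, DecidableEq (U i)]
    (p q : ∀ i, U i → ℝ) (M : ℝ)
    (hp0 : ∀ i, ∀ x : U i, 0 < p i x) (hp1 : ∀ i, ∑ x : U i, p i x = 1)
    (hq0 : ∀ i, ∀ x : U i, 0 ≤ q i x) (hq1 : ∀ i, ∑ x : U i, q i x = 1)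
    (F : (∀ i, U i) → ℝ) (hF : ∀ u, |F u| ≤ M)
    (Atil A : ∀ i, U i → ℝ)
    (hAtil : ∀ i, ∀ x : U i, Atil i x =
      ∑ u : ∀ j, U j, if u i = x then
          (∏ j ∈ Finset.univ.filter (fun j => j < i), q j (u j)) *
            (∏ j ∈ Finset.univ.filter (fun j => i < j), p j (u j)) * F u
        else 0)
    (hA : ∀ i, ∀ x : U i, A i x =
      ∑ u : ∀ j, U j, if u i = x then
          (∏ j ∈ Finset.univ.filter (fun j => j ≠ i), p j (u j)) * F u
        else 0) :
    ∑ i, ∑ x : U i, (q i x - p i x) * (Atil i x - A i x)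
      ≤ 2 * n * M * ∑ j, ∑ y : U j, q j y * Real.log (q j y / p j y) :=
  cross_term_kl_bound_general p q M hp0 hp1 hq0 hq1 F hF Atil A hAtil hA
end

section
/- Let U_1, …, U_n be nonempty finite sets, for each i let p_i be a probability mass function on U_i with p_i(u) > 0 for all u ∈ U_i, and let F : U_1 × ⋯ × U_n → ℝ satisfy |F(u)| ≤ M for all u. Let c > 0. For each i define the zero-mean local advantage A_i(u_i) = Σ_{u_{-i}} (∏_{j≠i} p_j(u_j)) F(u) − Σ_u (∏_j p_j(u_j)) F(u), the normalizer g_i = Σ_{u_i ∈ U_i} p_i(u_i) exp(c · A_i(u_i)), and the tilted distribution q_i(u_i) = p_i(u_i) exp(c · A_i(u_i)) / g_i. Then Σ_u (∏_i q_i(u_i)) F(u) − Σ_u (∏_i p_i(u_i)) F(u) ≥ (1/c − 2nM) · Σ_{i=1}^n KL(q_i ‖ p_i) + (1/c) · Σ_{i=1}^n log g_i, where KL(q ‖ p) = Σ_u q(u) log(q(u)/p(u)). -/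
/-!
Write `q i = p i + d i`. The expected potential is multilinear in the marginals, so switching the
agents from `p` to `q` one at a time changes it by the first-order terms `∑ i, E(d i; p₋ᵢ)`, up to
cross terms bounded by `M ‖d i‖₁ ‖d j‖₁` (the untouched marginals are probability vectors); in
total the error is at most `M/2 (∑ i, ‖d i‖₁)² ≤ nM/2 ∑ i, ‖d i‖₁²`. Pinsker's inequality (with
constant 4, through the Hellinger distance) bounds this by `2nM ∑ i, KL(q i ‖ p i)`, and for the
exponential tilt the first-order term of agent `i` is `(KL(q i ‖ p i) + log g i) / c`.
-/

open Finset Function Real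

section ProductExpectation

variable {ι : Type*} [Fintype ι] [DecidableEq ι] {U : ι → Type*} [∀ i, Fintype (U i)]

def productExpectation (F : (∀ i, U i) → ℝ) (r : ∀ i, U i → ℝ) : ℝ :=
  ∑ u : ∀ i, U i, (∏ i, r i (u i)) * F u

def partialExpectation [∀ i, DecidableEq (U i)] (F : (∀ i, U i) → ℝ) (r : ∀ i, U i → ℝ)
    (i : ι) (x : U i) : ℝ :=
  ∑ u : ∀ j, U j, if u i = x then (∏ j ∈ univ.filter (fun j => j ≠ i), r j (u j)) * F u else 0

variable (F : (∀ i, U i) → ℝ)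

theorem productExpectation_update [∀ i, DecidableEq (U i)] (r : ∀ i, U i → ℝ) (i : ι)
    (a : U i → ℝ) :
    productExpectation F (update r i a) = ∑ x, a x * partialExpectation F r i x := by
  simp only [partialExpectation, mul_sum, mul_ite, mul_zero]
  rw [sum_comm]
  refine sum_congr rfl fun u _ => ?_
  rw [sum_ite_eq, if_pos (mem_univ _), filter_ne', ← sdiff_singleton_eq_erase, ← mul_assoc,
    ← prod_update_of_mem (mem_univ i)]
  congr 2 with j
  exact apply_update (fun j (rj : U j → ℝ) => rj (u j)) r i a j

theorem productExpectation_update_sub (r : ∀ i, U i → ℝ) (i : ι) (a b : U i → ℝ) :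
    productExpectation F (update r i (a - b)) =
      productExpectation F (update r i a) - productExpectation F (update r i b) := by
  classical
  simp only [productExpectation_update, Pi.sub_apply, sub_mul, sum_sub_distrib]

theorem productExpectation_update_sub_self [∀ i, DecidableEq (U i)] (r : ∀ i, U i → ℝ) (i : ι)
    {a : U i → ℝ} (ha : ∑ x, a x = 1) :
    productExpectation F (update r i (a - r i)) =
      ∑ x, a x * (partialExpectation F r i x - productExpectation F r) := by
  have hr := productExpectation_update F r i (r i)
  rw [update_eq_self] at hr
  simp only [hr, productExpectation_update, mul_sub, sum_sub_distrib, ← sum_mul, ha, one_mul,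
    Pi.sub_apply, sub_mul]

variable {F} {M : ℝ}

theorem abs_productExpectation_le (hF : ∀ u, |F u| ≤ M) (r : ∀ i, U i → ℝ) :
    |productExpectation F r| ≤ M * ∏ i, ∑ x, |r i x| := by
  rw [prod_univ_sum, mul_sum]
  refine (abs_sum_le_sum_abs _ _).trans (sum_le_sum fun u _ => ?_)
  rw [abs_mul, abs_prod, mul_comm M]
  exact mul_le_mul_of_nonneg_left (hF u) (prod_nonneg fun i _ => abs_nonneg _)

theorem abs_productExpectation_update_update_le (hF : ∀ u, |F u| ≤ M) {r : ∀ i, U i → ℝ}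
    (hr : ∀ i, ∑ x, |r i x| = 1) {a b : ι} (hab : a ≠ b) (v : U a → ℝ) (w : U b → ℝ) :
    |productExpectation F (update (update r a v) b w)| ≤
      M * ((∑ x, |v x|) * ∑ x, |w x|) := by
  refine (abs_productExpectation_le hF _).trans_eq ?_
  have hnorm : (fun i => ∑ x, |update (update r a v) b w i x|) =
      update (update (fun _ => 1) a (∑ x, |v x|)) b (∑ x, |w x|) := by
    ext i
    rcases eq_or_ne i b with rfl | hib
    · simp
    rcases eq_or_ne i a with rfl | hia
    · simp [hib]
    · simp [hib, hia, hr]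
  rw [hnorm, prod_update_of_mem (mem_univ b), prod_update_of_mem (by simp [hab])]
  simp [mul_comm]

theorem abs_productExpectation_update_piecewise_sub_le (hF : ∀ u, |F u| ≤ M)
    {r r' : ∀ i, U i → ℝ} (hr : ∀ i, ∑ x, |r i x| = 1) (hr' : ∀ i, ∑ x, |r' i x| = 1)
    {s : Finset ι} {a : ι} (ha : a ∉ s) (v : U a → ℝ) :
    |productExpectation F (update (s.piecewise r' r) a v) - productExpectation F (update r a v)|
      ≤ M * (∑ x, |v x|) * ∑ b ∈ s, ∑ x, |r' b x - r b x| := by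
  induction s using Finset.induction_on with
  | empty => simp
  | insert b s hb ih =>
    obtain ⟨hab, has⟩ : a ≠ b ∧ a ∉ s := by simpa using ha
    set P := update (s.piecewise r' r) a v
    have hP : update P b (r b) = P := by
      simp [P, update_eq_self_iff, update_of_ne hab.symm, piecewise_eq_of_notMem _ _ _ hb]
    have hstep : productExpectation F (update ((insert b s).piecewise r' r) a v) -
        productExpectation F P = productExpectation F (update P b (r' b - r b)) := by
      rw [productExpectation_update_sub, hP, piecewise_insert, update_comm hab.symm]
    have hpw : ∀ i, ∑ x, |s.piecewise r' r i x| = 1 := fun i =>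
      s.piecewise_cases r' r (fun ri => ∑ x, |ri x| = 1) (hr' i) (hr i)
    have hbound := abs_productExpectation_update_update_le hF hpw hab v (r' b - r b)
    rw [sum_insert hb, mul_add]
    calc _ ≤ |productExpectation F (update ((insert b s).piecewise r' r) a v) -
            productExpectation F P| + |productExpectation F P - productExpectation F (update r a v)| :=
          abs_sub_le _ _ _
      _ ≤ _ := by
          rw [hstep]
          simp only [Pi.sub_apply, ← mul_assoc] at hbound
          linarith [ih has]

theorem abs_productExpectation_piecewise_sub_sub_sum_le [∀ i, Nonempty (U i)]
    (hF : ∀ u, |F u| ≤ M) {r r' : ∀ i, U i → ℝ} (hr : ∀ i, ∑ x, |r i x| = 1)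
    (hr' : ∀ i, ∑ x, |r' i x| = 1) (s : Finset ι) :
    |productExpectation F (s.piecewise r' r) - productExpectation F r -
        ∑ a ∈ s, productExpectation F (update r a (r' a - r a))|
      ≤ M / 2 * (∑ a ∈ s, ∑ x, |r' a x - r a x|) ^ 2 := by
  have hM : 0 ≤ M := (abs_nonneg _).trans (hF (Classical.arbitrary _))
  induction s using Finset.induction_on with
  | empty => simp
  | insert a s ha ih =>
    set S := ∑ b ∈ s, ∑ x, |r' b x - r b x|
    set t := ∑ x, |r' a x - r a x|
    have hstep : productExpectation F ((insert a s).piecewise r' r) -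
        productExpectation F (s.piecewise r' r) =
          productExpectation F (update (s.piecewise r' r) a (r' a - r a)) := by
      rw [productExpectation_update_sub, piecewise_insert, update_eq_self_iff.2
        (piecewise_eq_of_notMem _ _ _ ha).symm]
    have hcross := abs_productExpectation_update_piecewise_sub_le hF hr hr' ha (r' a - r a)
    simp only [Pi.sub_apply] at hcross
    rw [sum_insert ha, sum_insert ha]
    calc _ ≤ |productExpectation F (s.piecewise r' r) - productExpectation F r -
            ∑ b ∈ s, productExpectation F (update r b (r' b - r b))| +
          |productExpectation F (update (s.piecewise r' r) a (r' a - r a)) -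
            productExpectation F (update r a (r' a - r a))| := by
          rw [← hstep]
          exact (abs_add_le _ _).trans_eq' (by ring_nf)
      _ ≤ M / 2 * S ^ 2 + M * t * S := add_le_add ih hcross
      _ ≤ M / 2 * (t + S) ^ 2 := by nlinarith [mul_nonneg hM (sq_nonneg t)]

theorem abs_productExpectation_sub_sub_sum_le [∀ i, Nonempty (U i)] (hF : ∀ u, |F u| ≤ M)
    {r r' : ∀ i, U i → ℝ} (hr : ∀ i, ∑ x, |r i x| = 1) (hr' : ∀ i, ∑ x, |r' i x| = 1) :
    |productExpectation F r' - productExpectation F r -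
        ∑ a, productExpectation F (update r a (r' a - r a))|
      ≤ M / 2 * (∑ a, ∑ x, |r' a x - r a x|) ^ 2 := by
  simpa using abs_productExpectation_piecewise_sub_sub_sum_le hF hr hr' univ

end ProductExpectation

theorem sq_sqrt_sub_sqrt_le {p q : ℝ} (hp : 0 < p) (hq : 0 < q) :
    (√q - √p) ^ 2 ≤ q * log (q / p) - q + p := by
  have hlog : log (√p / √q) ≤ √p / √q - 1 := log_le_sub_one_of_pos (by positivity)
  have hsq : log (q / p) = -2 * log (√p / √q) := by
    rw [log_div hq.ne' hp.ne', log_div (by positivity) (by positivity), log_sqrt hp.le,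
      log_sqrt hq.le]
    ring
  have hpq : q * (√p / √q) = √p * √q := by
    field_simp; rw [sq_sqrt hq.le]
  rw [sub_sq, sq_sqrt hq.le, sq_sqrt hp.le, hsq]
  linarith [mul_le_mul_of_nonneg_left hlog hq.le]

theorem sq_sub_le_two_mul_add_mul_sq_sqrt_sub {p q : ℝ} (hp : 0 ≤ p) (hq : 0 ≤ q) :
    (q - p) ^ 2 ≤ 2 * (q + p) * (√q - √p) ^ 2 := by
  have hfac : q - p = (√q - √p) * (√q + √p) := by
    linear_combination (sq_sqrt hq).symm - (sq_sqrt hp).symm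
  rw [hfac, mul_pow, mul_comm]
  refine mul_le_mul_of_nonneg_right ?_ (sq_nonneg _)
  nlinarith [sq_nonneg (√q - √p), sq_sqrt hp, sq_sqrt hq]

theorem sq_sum_abs_sub_le_four_mul_sum_mul_log_div {α : Type*} [Fintype α] {p q : α → ℝ}
    (hp : ∀ x, 0 < p x) (hq : ∀ x, 0 < q x) (hp1 : ∑ x, p x = 1) (hq1 : ∑ x, q x = 1) :
    (∑ x, |q x - p x|) ^ 2 ≤ 4 * ∑ x, q x * log (q x / p x) := by
  have hw : ∀ x ∈ univ, 0 < 2 * (q x + p x) := fun x _ => by linarith [hp x, hq x]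
  have hw4 : ∑ x, 2 * (q x + p x) = 4 := by
    rw [← mul_sum, sum_add_distrib, hp1, hq1]; norm_num
  have hcs := sq_sum_div_le_sum_sq_div univ (fun x => |q x - p x|) hw
  have hterm : ∀ x ∈ univ, |q x - p x| ^ 2 / (2 * (q x + p x)) ≤
      q x * log (q x / p x) - q x + p x := fun x hx => by
    rw [div_le_iff₀ (hw x hx), sq_abs, mul_comm]
    exact (sq_sub_le_two_mul_add_mul_sq_sqrt_sub (hp x).le (hq x).le).trans
      (mul_le_mul_of_nonneg_left (sq_sqrt_sub_sqrt_le (hp x) (hq x)) (hw x hx).le)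
  have hkl : ∑ x, (q x * log (q x / p x) - q x + p x) = ∑ x, q x * log (q x / p x) := by
    rw [sum_add_distrib, sum_sub_distrib, hp1, hq1]; ring
  rw [hw4] at hcs
  linarith [hcs.trans (sum_le_sum hterm)]

section Tilt

variable {α : Type*} {p A q : α → ℝ} {c g : ℝ}

theorem tilt_pos (hp : ∀ x, 0 < p x) (hg : 0 < g)
    (hq : ∀ x, q x = p x * exp (c * A x) / g) (x : α) : 0 < q x := by
  rw [hq]; have := hp x; positivity

theorem sum_tilt [Fintype α] (hg : g = ∑ x, p x * exp (c * A x)) (hg0 : g ≠ 0)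
    (hq : ∀ x, q x = p x * exp (c * A x) / g) : ∑ x, q x = 1 := by
  simp only [hq, ← sum_div, ← hg, div_self hg0]

theorem sum_mul_log_div_tilt [Fintype α] (hp : ∀ x, 0 < p x) (hg : 0 < g)
    (hq : ∀ x, q x = p x * exp (c * A x) / g) (hq1 : ∑ x, q x = 1) :
    ∑ x, q x * log (q x / p x) = c * ∑ x, q x * A x - log g := by
  have hlog : ∀ x, log (q x / p x) = c * A x - log g := fun x => by
    rw [hq, mul_div_assoc, mul_div_cancel_left₀ _ (hp x).ne', log_div (exp_pos _).ne' hg.ne',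
      log_exp]
  simp only [hlog, mul_sub, sum_sub_distrib, ← sum_mul, hq1, one_mul, mul_sum]
  congr 1; exact sum_congr rfl fun x _ => by ring

end Tilt

theorem sum_abs_eq_one {α : Type*} [Fintype α] {r : α → ℝ} (hr0 : ∀ x, 0 ≤ r x)
    (hr1 : ∑ x, r x = 1) : ∑ x, |r x| = 1 := by
  simp only [fun x => abs_of_nonneg (hr0 x), hr1]

theorem sum_update_sub_sub_kl_le_productExpectation_sub {ι : Type*} [Fintype ι] [DecidableEq ι]
    {U : ι → Type*} [∀ i, Fintype (U i)] [∀ i, Nonempty (U i)] {F : (∀ i, U i) → ℝ} {M : ℝ}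
    (hF : ∀ u, |F u| ≤ M) {r r' : ∀ i, U i → ℝ} (hr0 : ∀ i x, 0 < r i x)
    (hr1 : ∀ i, ∑ x, r i x = 1) (hr'0 : ∀ i x, 0 < r' i x) (hr'1 : ∀ i, ∑ x, r' i x = 1) :
    ∑ i, productExpectation F (update r i (r' i - r i)) -
        2 * Fintype.card ι * M * ∑ i, ∑ x, r' i x * log (r' i x / r i x) ≤
      productExpectation F r' - productExpectation F r := by
  have htaylor := abs_productExpectation_sub_sub_sum_le hF
    (fun i => sum_abs_eq_one (fun x => (hr0 i x).le) (hr1 i))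
    (fun i => sum_abs_eq_one (fun x => (hr'0 i x).le) (hr'1 i))
  have hM : 0 ≤ M := (abs_nonneg _).trans (hF (Classical.arbitrary _))
  have hpinsker : ∑ i, (∑ x, |r' i x - r i x|) ^ 2 ≤
      4 * ∑ i, ∑ x, r' i x * log (r' i x / r i x) := by
    rw [mul_sum]
    exact sum_le_sum fun i _ =>
      sq_sum_abs_sub_le_four_mul_sum_mul_log_div (hr0 i) (hr'0 i) (hr1 i) (hr'1 i)
  have hcs := sq_sum_le_card_mul_sum_sq (s := univ) (f := fun i => ∑ x, |r' i x - r i x|)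
  rw [card_univ] at hcs
  have herr : M / 2 * (∑ i, ∑ x, |r' i x - r i x|) ^ 2 ≤
      2 * Fintype.card ι * M * ∑ i, ∑ x, r' i x * log (r' i x / r i x) :=
    calc _ ≤ M / 2 * (Fintype.card ι * (4 * ∑ i, ∑ x, r' i x * log (r' i x / r i x))) := by
          gcongr; exact hcs.trans (by gcongr)
      _ = _ := by ring
  linarith [(abs_le.1 htaylor).1]

/-- Single-stage specialization of Lemma 3: the potential improvement under the
simultaneous exponential-tilt update of all agents is lower bounded by a KL
term plus the sum of log-normalizers. -/
theorem one_shot_npg_improvement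
    {n : ℕ} {U : Fin n → Type*} [∀ i, Fintype (U i)] [∀ i, Nonempty (U i)]
    [∀ i, DecidableEq (U i)]
    (p : ∀ i, U i → ℝ) (M : ℝ)
    (hp0 : ∀ i, ∀ x : U i, 0 < p i x) (hp1 : ∀ i, ∑ x : U i, p i x = 1)
    (F : (∀ i, U i) → ℝ) (hF : ∀ u, |F u| ≤ M)
    (c : ℝ) (hc : 0 < c)
    (A : ∀ i, U i → ℝ)
    (hA : ∀ i, ∀ x : U i, A i x =
      (∑ u : ∀ j, U j, if u i = x then
          (∏ j ∈ Finset.univ.filter (fun j => j ≠ i), p j (u j)) * F u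
        else 0) - ∑ u : ∀ j, U j, (∏ j, p j (u j)) * F u)
    (g : Fin n → ℝ)
    (hg : ∀ i, g i = ∑ x : U i, p i x * Real.exp (c * A i x))
    (q : ∀ i, U i → ℝ)
    (hq : ∀ i, ∀ x : U i, q i x = p i x * Real.exp (c * A i x) / g i) :
    (∑ u : ∀ i, U i, (∏ i, q i (u i)) * F u) -
        (∑ u : ∀ i, U i, (∏ i, p i (u i)) * F u)
      ≥ (1 / c - 2 * n * M) *
          (∑ i, ∑ x : U i, q i x * Real.log (q i x / p i x)) +
        (1 / c) * ∑ i, Real.log (g i) := by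
  have hg0 : ∀ i, 0 < g i := fun i =>
    hg i ▸ sum_pos (fun x _ => mul_pos (hp0 i x) (exp_pos _)) univ_nonempty
  have hq0 : ∀ i, ∀ x, 0 < q i x := fun i => tilt_pos (hp0 i) (hg0 i) (hq i)
  have hq1 : ∀ i, ∑ x, q i x = 1 := fun i => sum_tilt (hg i) (hg0 i).ne' (hq i)
  have hfirst : ∀ i, productExpectation F (update p i (q i - p i)) =
      1 / c * ∑ x, q i x * log (q i x / p i x) + 1 / c * log (g i) := by
    intro i
    have hA' : ∀ x, partialExpectation F p i x - productExpectation F p = A i x :=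
      fun x => (hA i x).symm
    rw [productExpectation_update_sub_self F p i (hq1 i),
      sum_mul_log_div_tilt (hp0 i) (hg0 i) (hq i) (hq1 i)]
    simp only [hA']
    field_simp
    ring
  have hbound := sum_update_sub_sub_kl_le_productExpectation_sub hF hp0 hp1 hq0 hq1
  rw [Fintype.card_fin] at hbound
  simp only [hfirst, sum_add_distrib, ← mul_sum] at hbound
  change productExpectation F q - productExpectation F p ≥ _
  linarith
end
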